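/- arXiv:2502.02319 — 3 statements merged into one kernel-verified Lean document; each statement's English description precedes it below -/
import Mathlib

section
/- Let B be a positive definite matrix with spectral decomposition B = Σᵢ bᵢ |bᵢ⟩⟨bᵢ|, A any matrix, and μ ∈ (0,1). Then ∫₀^∞ (B+t)⁻¹ A (B+t)⁻¹ t^μ dt = (π/sin(πμ)) · Σ_{i,j} [(bᵢ^μ − bⱼ^μ)/(bᵢ − bⱼ)] |bᵢ⟩⟨bᵢ| A |bⱼ⟩⟨bⱼ|, where for bᵢ = bⱼ the quotient is interpreted as the derivative μ·bᵢ^(μ−1). -/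
open scoped Kronecker Matrix ComplexOrder

attribute [local instance] Matrix.frobeniusNormedAddCommGroup Matrix.frobeniusNormedSpace

/-- Matrix power via functional calculus on eigenvalues (with the convention
`0 ^ p = 0` for `p ≠ 0`, giving powers on the support). -/
noncomputable def mpow {n : Type*} [Fintype n] [DecidableEq n]
    (A : Matrix n n ℂ) (p : ℝ) : Matrix n n ℂ :=
  cfc (fun x : ℝ => x ^ p) A

/-- `Q_β(ρ‖σ) = Tr((σ^((1-β)/(2β)) ρ σ^((1-β)/(2β)))^β)`. -/
noncomputable def sandQ {n : Type*} [Fintype n] [DecidableEq n]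
    (β : ℝ) (ρ σ : Matrix n n ℂ) : ℝ :=
  ((cfc (fun x : ℝ => x ^ β)
      (mpow σ ((1 - β) / (2 * β)) * ρ * mpow σ ((1 - β) / (2 * β)))).trace).re

/-- Umegaki relative entropy (base 2). -/
noncomputable def umegaki {n : Type*} [Fintype n] [DecidableEq n]
    (ρ σ : Matrix n n ℂ) : ℝ :=
  ((ρ * (cfc (fun x : ℝ => Real.logb 2 x) ρ - cfc (fun x : ℝ => Real.logb 2 x) σ)).trace).re

/-- Sandwiched Rényi divergence for `α ≠ 1`. -/
noncomputable def sandD {n : Type*} [Fintype n] [DecidableEq n]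
    (α : ℝ) (ρ σ : Matrix n n ℂ) : ℝ :=
  (α - 1)⁻¹ * Real.logb 2 (sandQ α ρ σ / (ρ.trace).re)

/-- Sandwiched Rényi divergence, extended by continuity (Umegaki) at `α = 1`. -/
noncomputable def sandDfull {n : Type*} [Fintype n] [DecidableEq n]
    (α : ℝ) (ρ σ : Matrix n n ℂ) : ℝ :=
  if α = 1 then umegaki ρ σ else sandD α ρ σ

/-- Petz Rényi divergence. -/
noncomputable def petzD {n : Type*} [Fintype n] [DecidableEq n]
    (α : ℝ) (ρ σ : Matrix n n ℂ) : ℝ :=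
  (α - 1)⁻¹ * Real.logb 2 (((mpow ρ α * mpow σ (1 - α)).trace).re / (ρ.trace).re)

/-- Sandwiched conditional Rényi entropy `H_α(A|B) = -inf_{σ_B} D̃_α(ρ_{AB}‖I_A⊗σ_B)`,
infimum over density operators on `B`. -/
noncomputable def condH {a b : Type*} [Fintype a] [DecidableEq a] [Fintype b] [DecidableEq b]
    (α : ℝ) (ρ : Matrix (a × b) (a × b) ℂ) : ℝ :=
  - sInf {x : ℝ | ∃ σ : Matrix b b ℂ, σ.PosSemidef ∧ σ.trace = 1 ∧
      x = sandDfull α ρ ((1 : Matrix a a ℂ) ⊗ₖ σ)}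

/-!
Writing `B + t = ∑ᵢ (bᵢ + t) Pᵢ` with the spectral projections `Pᵢ = |bᵢ⟩⟨bᵢ|`, the integrand
becomes `∑ᵢⱼ t^μ (bᵢ + t)⁻¹ (bⱼ + t)⁻¹ Pᵢ A Pⱼ`, so everything reduces to the scalar integral
`∫₀^∞ t^μ (a + t)⁻¹ (b + t)⁻¹ dt`. For `a ≠ b` partial fractions reduce it to
`∫₀^∞ t^(μ-1) (c + t)⁻¹ dt`, and for `a = b` it is `∫₀^∞ t^μ (c + t)⁻² dt`. Both are Beta integrals:
the substitution `t = c x / (1 - x)` turns `∫₀^∞ t^(u-1) (c + t)^(-(u+v)) dt` into `c^(-v) B(u, v)`,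
and the reflection formula `Γ(μ) Γ(1 - μ) = π / sin (π μ)` produces the constant.
-/

open MeasureTheory Set Real

lemma integral_Ioo_rpow_mul_one_sub_rpow {u v : ℝ} (hu : 0 < u) (hv : 0 < v) :
    ∫ x in Ioo (0 : ℝ) 1, x ^ (u - 1) * (1 - x) ^ (v - 1) =
      Gamma u * Gamma v / Gamma (u + v) := by
  have hbeta : Complex.betaIntegral u v =
      ((∫ x in Ioo (0 : ℝ) 1, x ^ (u - 1) * (1 - x) ^ (v - 1) : ℝ) : ℂ) := by
    rw [Complex.betaIntegral, intervalIntegral.integral_of_le zero_le_one,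
      integral_Ioc_eq_integral_Ioo, ← integral_complex_ofReal]
    refine setIntegral_congr_fun measurableSet_Ioo fun x hx => ?_
    push_cast [Complex.ofReal_cpow hx.1.le, Complex.ofReal_cpow (sub_pos.2 hx.2).le]
    rfl
  have := Complex.betaIntegral_eq_Gamma_mul_div u v (by simpa) (by simpa)
  rw [hbeta, ← Complex.ofReal_add, Complex.Gamma_ofReal, Complex.Gamma_ofReal,
    Complex.Gamma_ofReal] at this
  exact_mod_cast this

lemma hasDerivAt_mul_div_one_sub (c : ℝ) {x : ℝ} (hx : x ≠ 1) :
    HasDerivAt (fun x => c * x / (1 - x)) (c / (1 - x) ^ 2) x := by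
  have h1 : 1 - x ≠ 0 := sub_ne_zero.2 hx.symm
  refine (((hasDerivAt_id x).const_mul c).div ((hasDerivAt_id x).const_sub 1) h1).congr_deriv
    ?_
  simp only [id, mul_one]
  ring

lemma injOn_mul_div_one_sub {c : ℝ} (hc : c ≠ 0) : InjOn (fun x => c * x / (1 - x)) (Iio 1) := by
  intro x hx y hy h
  have hx' : 1 - x ≠ 0 := (sub_pos.2 hx).ne'
  have hy' : 1 - y ≠ 0 := (sub_pos.2 hy).ne'
  field_simp at h
  linear_combination h

lemma image_mul_div_one_sub_Ioo {c : ℝ} (hc : 0 < c) :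
    (fun x => c * x / (1 - x)) '' Ioo 0 1 = Ioi 0 := by
  ext t
  constructor
  · rintro ⟨x, hx, rfl⟩
    exact div_pos (mul_pos hc hx.1) (sub_pos.2 hx.2)
  · intro (ht : 0 < t)
    refine ⟨t / (c + t), ⟨by positivity, (div_lt_one (by positivity)).2 (by linarith)⟩, ?_⟩
    have : 1 - t / (c + t) = c / (c + t) := by field_simp; ring
    simp only [this]
    field_simp

lemma abs_deriv_mul_div_one_sub_smul {c u v x : ℝ} (hc : 0 < c) (hx : x ∈ Ioo (0 : ℝ) 1) :
    |c / (1 - x) ^ 2| • ((c * x / (1 - x)) ^ (u - 1) * (c + c * x / (1 - x)) ^ (-(u + v))) =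
      c ^ (-v) * (x ^ (u - 1) * (1 - x) ^ (v - 1)) := by
  obtain ⟨hx0, hx1⟩ := hx
  have hy : 0 < 1 - x := sub_pos.2 hx1
  have hct : c + c * x / (1 - x) = c / (1 - x) := by field_simp; ring
  have hy_pow :
      (1 - x) ^ 2 * (1 - x) ^ (u - 1) * (1 - x) ^ (-(u + v)) * (1 - x) ^ (v - 1) = 1 := by
    rw [← rpow_two, ← rpow_add hy, ← rpow_add hy, ← rpow_add hy]; ring_nf; exact rpow_zero _
  rw [hct, smul_eq_mul, abs_of_pos (by positivity), div_rpow (mul_pos hc hx0).le hy.le,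
    mul_rpow hc.le hx0.le, div_rpow hc.le hy.le, show -v = 1 + (u - 1) + -(u + v) by ring,
    rpow_add hc, rpow_add hc, rpow_one]
  field_simp
  exact hy_pow.symm

lemma integral_Ioi_rpow_mul_add_rpow_neg {c u v : ℝ} (hc : 0 < c) (hu : 0 < u) (hv : 0 < v) :
    ∫ t in Ioi 0, t ^ (u - 1) * (c + t) ^ (-(u + v)) =
      c ^ (-v) * (Gamma u * Gamma v / Gamma (u + v)) := by
  have hderiv : ∀ x ∈ Ioo (0 : ℝ) 1,
      HasDerivWithinAt (fun x => c * x / (1 - x)) (c / (1 - x) ^ 2) (Ioo 0 1) x :=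
    fun x hx => (hasDerivAt_mul_div_one_sub c hx.2.ne).hasDerivWithinAt
  rw [← image_mul_div_one_sub_Ioo hc,
    integral_image_eq_integral_abs_deriv_smul measurableSet_Ioo hderiv
      ((injOn_mul_div_one_sub hc.ne').mono fun x hx => hx.2),
    setIntegral_congr_fun measurableSet_Ioo fun x hx => abs_deriv_mul_div_one_sub_smul hc hx,
    integral_const_mul, integral_Ioo_rpow_mul_one_sub_rpow hu hv]

lemma integral_Ioi_rpow_sub_one_mul_inv_add {c μ : ℝ} (hc : 0 < c)
    (hμ : μ ∈ Ioo (0 : ℝ) 1) :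
    ∫ t in Ioi 0, t ^ (μ - 1) * (c + t)⁻¹ = π / sin (π * μ) * c ^ (μ - 1) := by
  have h := integral_Ioi_rpow_mul_add_rpow_neg hc hμ.1 (sub_pos.2 hμ.2)
  rw [add_sub_cancel, Gamma_one, div_one, Gamma_mul_Gamma_one_sub, neg_sub] at h
  simp only [rpow_neg_one] at h
  rw [h, mul_comm]

lemma integral_Ioi_rpow_mul_inv_add_mul_inv_add_self {c μ : ℝ} (hc : 0 < c)
    (hμ : μ ∈ Ioo (0 : ℝ) 1) :
    ∫ t in Ioi 0, t ^ μ * ((c + t)⁻¹ * (c + t)⁻¹) = π / sin (π * μ) * (μ * c ^ (μ - 1)) := by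
  have h := integral_Ioi_rpow_mul_add_rpow_neg hc (by linarith [hμ.1] : 0 < μ + 1)
    (sub_pos.2 hμ.2)
  rw [show μ + 1 + (1 - μ) = 2 by ring, Gamma_two, div_one, Gamma_add_one hμ.1.ne', mul_assoc,
    Gamma_mul_Gamma_one_sub, neg_sub, add_sub_cancel_right] at h
  convert h using 1
  · refine setIntegral_congr_fun measurableSet_Ioi fun t (ht : 0 < t) => ?_
    rw [rpow_neg (by positivity), rpow_two, sq, mul_inv]
  · ring

lemma dslope_rpow_const (μ a b : ℝ) :
    dslope (fun x => x ^ μ) b a =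
      if a = b then μ * a ^ (μ - 1) else (a ^ μ - b ^ μ) / (a - b) := by
  split_ifs with hab
  · rw [hab, dslope_same, Real.deriv_rpow_const]
  · rw [dslope_of_ne _ hab, slope_def_field]

lemma dslope_rpow_const_pos {μ a b : ℝ} (hμ : 0 < μ) (ha : 0 < a) (hb : 0 < b) :
    0 < dslope (fun x => x ^ μ) b a := by
  rcases eq_or_ne a b with rfl | hab
  · rw [dslope_same, Real.deriv_rpow_const]
    positivity
  · rw [dslope_of_ne _ hab]
    exact (strictMonoOn_rpow_Ici_of_exponent_pos hμ).slope_pos hb.le ha.le (Ne.symm hab)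

lemma pi_div_sin_pi_mul_pos {μ : ℝ} (hμ : μ ∈ Ioo (0 : ℝ) 1) : 0 < π / sin (π * μ) :=
  div_pos pi_pos <| sin_pos_of_pos_of_lt_pi (mul_pos pi_pos hμ.1)
    (mul_lt_of_lt_one_right pi_pos hμ.2)

lemma integrableOn_Ioi_rpow_sub_one_mul_inv_add {c μ : ℝ} (hc : 0 < c)
    (hμ : μ ∈ Ioo (0 : ℝ) 1) :
    IntegrableOn (fun t => t ^ (μ - 1) * (c + t)⁻¹) (Ioi 0) := by
  -- a non-integrable function would have integral `0`
  refine Integrable.of_integral_ne_zero ?_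
  rw [integral_Ioi_rpow_sub_one_mul_inv_add hc hμ]
  exact (mul_pos (pi_div_sin_pi_mul_pos hμ) (rpow_pos_of_pos hc _)).ne'

lemma integral_Ioi_rpow_mul_inv_add_mul_inv_add {a b μ : ℝ} (ha : 0 < a) (hb : 0 < b)
    (hμ : μ ∈ Ioo (0 : ℝ) 1) :
    ∫ t in Ioi 0, t ^ μ * ((a + t)⁻¹ * (b + t)⁻¹) =
      π / sin (π * μ) * dslope (fun x => x ^ μ) b a := by
  rw [dslope_rpow_const]
  split_ifs with hab
  · rw [hab, integral_Ioi_rpow_mul_inv_add_mul_inv_add_self hb hμ]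
  have hab' : a - b ≠ 0 := sub_ne_zero.2 hab
  have hsplit : ∀ t ∈ Ioi (0 : ℝ), t ^ μ * ((a + t)⁻¹ * (b + t)⁻¹) =
      a / (a - b) * (t ^ (μ - 1) * (a + t)⁻¹) - b / (a - b) * (t ^ (μ - 1) * (b + t)⁻¹) := by
    intro t (ht : 0 < t)
    rw [rpow_sub_one ht.ne']
    field_simp
    ring
  rw [setIntegral_congr_fun measurableSet_Ioi hsplit,
    integral_sub ((integrableOn_Ioi_rpow_sub_one_mul_inv_add ha hμ).const_mul _)
      ((integrableOn_Ioi_rpow_sub_one_mul_inv_add hb hμ).const_mul _),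
    integral_const_mul, integral_const_mul, integral_Ioi_rpow_sub_one_mul_inv_add ha hμ,
    integral_Ioi_rpow_sub_one_mul_inv_add hb hμ, rpow_sub_one ha.ne', rpow_sub_one hb.ne']
  field_simp

lemma integrableOn_Ioi_rpow_mul_inv_add_mul_inv_add {a b μ : ℝ} (ha : 0 < a) (hb : 0 < b)
    (hμ : μ ∈ Ioo (0 : ℝ) 1) :
    IntegrableOn (fun t => t ^ μ * ((a + t)⁻¹ * (b + t)⁻¹)) (Ioi 0) := by
  refine Integrable.of_integral_ne_zero ?_
  rw [integral_Ioi_rpow_mul_inv_add_mul_inv_add ha hb hμ]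
  exact (mul_pos (pi_div_sin_pi_mul_pos hμ) (dslope_rpow_const_pos hμ.1 ha hb)).ne'

section SumSMul

variable {ι R A : Type*} [Fintype ι] [CommSemiring R] [Semiring A] [Algebra R A]

lemma OrthogonalIdempotents.sum_smul_mul_sum_smul {e : ι → A} (he : OrthogonalIdempotents e)
    (f g : ι → R) : (∑ i, f i • e i) * (∑ i, g i • e i) = ∑ i, (f i * g i) • e i := by
  classical
  simp only [Finset.sum_mul_sum, smul_mul_smul_comm, he.mul_eq, smul_ite, smul_zero,
    Finset.sum_ite_eq, Finset.mem_univ, if_true]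

lemma sum_smul_mul_mul_sum_smul (f g : ι → R) (e : ι → A) (a : A) :
    (∑ i, f i • e i) * a * (∑ j, g j • e j) = ∑ i, ∑ j, (f i * g j) • (e i * a * e j) := by
  rw [Finset.sum_mul, Finset.sum_mul_sum]
  simp only [smul_mul_assoc, mul_smul_comm, smul_smul, mul_comm (g _)]

end SumSMul

lemma CompleteOrthogonalIdempotents.matrix_inv_sum_smul {ι m K α : Type*} [Fintype ι]
    [Fintype m] [DecidableEq m] [Field K] [CommRing α] [Algebra K α] {e : ι → Matrix m m α}
    (he : CompleteOrthogonalIdempotents e) {f : ι → K} (hf : ∀ i, f i ≠ 0) :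
    (∑ i, f i • e i)⁻¹ = ∑ i, (f i)⁻¹ • e i :=
  Matrix.inv_eq_right_inv <| by
    simp only [he.toOrthogonalIdempotents.sum_smul_mul_sum_smul, mul_inv_cancel₀ (hf _),
      one_smul, he.complete]

lemma completeOrthogonalIdempotents_vecMulVec_star {n R : Type*} [Fintype n] [DecidableEq n]
    [CommRing R] [StarRing R] {v : n → n → R}
    (hv : ∀ i j, star (v i) ⬝ᵥ v j = if i = j then 1 else 0) :
    CompleteOrthogonalIdempotents fun i => Matrix.vecMulVec (v i) (star (v i)) := by
  refine ⟨OrthogonalIdempotents.iff_mul_eq.2 fun i j => ?_, ?_⟩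
  · rw [Matrix.vecMulVec_mul_vecMulVec, hv]
    split_ifs with hij
    · rw [hij, one_smul]
    · rw [zero_smul, Matrix.vecMulVec_zero]
  · set V : Matrix n n R := Matrix.of fun k i => v i k
    have hVV : Vᴴ * V = 1 := by
      ext i j
      simpa [V, Matrix.mul_apply, Matrix.one_apply, dotProduct] using hv i j
    rw [← mul_eq_one_comm.1 hVV]
    ext k l
    simp [V, Matrix.sum_apply, Matrix.vecMulVec_apply, Matrix.mul_apply]

lemma integral_sum_sum_smul_const {X ι κ E : Type*} [MeasurableSpace X] {ν : Measure X}
    [Fintype ι] [Fintype κ] [NormedAddCommGroup E] [NormedSpace ℝ E] [CompleteSpace E]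
    {g : ι → κ → X → ℝ} (hg : ∀ i j, Integrable (g i j) ν) (M : ι → κ → E) :
    ∫ x, ∑ i, ∑ j, g i j x • M i j ∂ν = ∑ i, ∑ j, (∫ x, g i j x ∂ν) • M i j := by
  rw [integral_finsetSum _ fun i _ => integrable_finsetSum _ fun j _ => (hg i j).smul_const _]
  refine Finset.sum_congr rfl fun i _ => ?_
  rw [integral_finsetSum _ fun j _ => (hg i j).smul_const _]
  simp only [integral_smul_const]

theorem stmt1 {n : Type*} [Fintype n] [DecidableEq n]
    (B A : Matrix n n ℂ) (b : n → ℝ) (v : n → (n → ℂ))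
    (hb : ∀ i, 0 < b i)
    (hortho : ∀ i j, star (v i) ⬝ᵥ v j = if i = j then 1 else 0)
    (hB : B = ∑ i, (b i : ℂ) • Matrix.vecMulVec (v i) (star (v i)))
    (μ : ℝ) (hμ : μ ∈ Set.Ioo (0 : ℝ) 1) :
    (∫ t in Set.Ioi (0 : ℝ), t ^ μ • ((B + t • 1)⁻¹ * A * (B + t • 1)⁻¹)) =
      (Real.pi / Real.sin (Real.pi * μ)) •
        ∑ i, ∑ j,
          (((if b i = b j then μ * b i ^ (μ - 1) else (b i ^ μ - b j ^ μ) / (b i - b j)) : ℝ) : ℂ) •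
            (Matrix.vecMulVec (v i) (star (v i)) * A * Matrix.vecMulVec (v j) (star (v j))) := by
  have hP := completeOrthogonalIdempotents_vecMulVec_star hortho
  have hshift : ∀ t : ℝ,
      B + t • 1 = ∑ i, (b i + t) • Matrix.vecMulVec (v i) (star (v i)) := by
    intro t
    rw [hB, ← hP.complete, Finset.smul_sum, ← Finset.sum_add_distrib]
    simp only [add_smul, Complex.coe_smul]
  have hintegrand : ∀ t ∈ Ioi (0 : ℝ), t ^ μ • ((B + t • 1)⁻¹ * A * (B + t • 1)⁻¹) =
      ∑ i, ∑ j, (t ^ μ * ((b i + t)⁻¹ * (b j + t)⁻¹)) •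
        (Matrix.vecMulVec (v i) (star (v i)) * A * Matrix.vecMulVec (v j) (star (v j))) := by
    intro t (ht : 0 < t)
    rw [hshift, hP.matrix_inv_sum_smul fun i => (add_pos (hb i) ht).ne',
      sum_smul_mul_mul_sum_smul]
    simp only [Finset.smul_sum, smul_smul]
  rw [setIntegral_congr_fun measurableSet_Ioi hintegrand, integral_sum_sum_smul_const
    (fun i j => integrableOn_Ioi_rpow_mul_inv_add_mul_inv_add (hb i) (hb j) hμ)]
  simp only [integral_Ioi_rpow_mul_inv_add_mul_inv_add (hb _) (hb _) hμ, dslope_rpow_const,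
    Finset.smul_sum, mul_smul, Complex.coe_smul]
end

section
/- For a positive definite matrix Ξ(x) depending differentiably on a real parameter x, and β ∈ (0,1), the derivative of Tr(Ξ(x)^β) equals Tr(β·Ξ(x)^(β−1)·Ξ'(x)). -/
open scoped Kronecker Matrix ComplexOrder

attribute [local instance] Matrix.frobeniusNormedAddCommGroup Matrix.frobeniusNormedSpace

/-!
Diagonalize `A = ∑ λᵢ uᵢuᵢ*` and `B = ∑ μⱼ vⱼvⱼ*` and put `qᵢⱼ = |⟪uᵢ, vⱼ⟫|²`, a doubly
stochastic matrix. Then `Re Tr (f(A) g(B)) = ∑ qᵢⱼ f(λᵢ) g(μⱼ)`, so both the first-order remainder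
`Tr f(B) - Tr f(A) - Tr (g(A) (B - A))` and `‖B - A‖₂²` are `q`-averages of their scalar
counterparts `f(μⱼ) - f(λᵢ) - g(λᵢ)(μⱼ - λᵢ)` and `(μⱼ - λᵢ)²`. A scalar Taylor bound with
constant `L` therefore bounds the remainder by `L ‖B - A‖₂²`, which is Fréchet differentiability of
`Tr f` along Hermitian matrices with derivative `M ↦ Re Tr (g(A) M)`. The same averaging shows that
every `μⱼ` lies within `‖B - A‖₂` of some `λᵢ`, so for `B` near the positive definite `A` all the
eigenvalues involved stay in a compact interval inside `(0, ∞)`, on which `r ↦ β r ^ (β - 1)` is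
Lipschitz.
-/

open scoped NNReal InnerProductSpace

theorem abs_sub_sub_mul_sub_le_of_lipschitzOnWith {f g : ℝ → ℝ} {s : Set ℝ} {K : ℝ≥0}
    (hs : Convex ℝ s) (hf : ∀ t ∈ s, HasDerivWithinAt f (g t) s t) (hg : LipschitzOnWith K g s)
    {a b : ℝ} (ha : a ∈ s) (hb : b ∈ s) :
    |f b - f a - g a * (b - a)| ≤ K * (b - a) ^ 2 := by
  have hab : Set.uIcc a b ⊆ s := hs.ordConnected.uIcc_subset ha hb
  have hderiv : ∀ t ∈ Set.uIcc a b, HasDerivWithinAt (fun t => f t - g a * t) (g t - g a)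
      (Set.uIcc a b) t := fun t ht => by
    have h := ((hf t (hab ht)).mono hab).sub ((hasDerivWithinAt_id t _).const_mul (g a))
    rw [mul_one] at h
    exact h
  have hbound : ∀ t ∈ Set.uIcc a b, ‖g t - g a‖ ≤ K * |b - a| := fun t ht =>
    calc ‖g t - g a‖ ≤ K * ‖t - a‖ := hg.norm_sub_le (hab ht) ha
      _ ≤ K * |b - a| := by gcongr; exact Set.abs_sub_left_of_mem_uIcc ht
  have := (convex_uIcc a b).norm_image_sub_le_of_norm_hasDerivWithin_le hderiv hbound
    Set.left_mem_uIcc Set.right_mem_uIcc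
  simp only [Real.norm_eq_abs] at this
  calc |f b - f a - g a * (b - a)| = |f b - g a * b - (f a - g a * a)| := by ring_nf
    _ ≤ K * |b - a| * |b - a| := this
    _ = K * (b - a) ^ 2 := by rw [mul_assoc, abs_mul_abs_self, sq]

theorem exists_abs_rpow_sub_sub_le (β : ℝ) {δ R : ℝ} (hδ : 0 < δ) :
    ∃ L : ℝ, ∀ a ∈ Set.Icc δ R, ∀ b ∈ Set.Icc δ R,
      |b ^ β - a ^ β - β * a ^ (β - 1) * (b - a)| ≤ L * (b - a) ^ 2 := by
  have hpos : ∀ t ∈ Set.Icc δ R, t ≠ 0 := fun t ht => (hδ.trans_le ht.1).ne'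
  obtain ⟨K, hK⟩ : ∃ K, LipschitzOnWith K (fun t : ℝ => β * t ^ (β - 1)) (Set.Icc δ R) := by
    refine ContDiffOn.exists_lipschitzOnWith (n := 1) ?_ one_ne_zero (convex_Icc δ R)
      isCompact_Icc
    exact fun t ht => (contDiffAt_const.mul (Real.contDiffAt_rpow_const_of_ne (hpos t ht)))
      |>.contDiffWithinAt
  refine ⟨K, fun a ha b hb => ?_⟩
  exact abs_sub_sub_mul_sub_le_of_lipschitzOnWith (convex_Icc δ R)
    (fun t ht => (Real.hasDerivAt_rpow_const (Or.inl (hpos t ht))).hasDerivWithinAt) hK ha hb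

namespace Matrix
variable {n : Type*} [Fintype n] [DecidableEq n]

omit [DecidableEq n] in
theorem frobenius_norm_sq_eq_re_trace (M : Matrix n n ℂ) : ‖M‖ ^ 2 = (Mᴴ * M).trace.re := by
  rw [frobenius_norm_def, ← Real.rpow_natCast, ← Real.rpow_mul (by positivity)]
  simp only [trace, diag_apply, mul_apply, conjTranspose_apply, Complex.re_sum]
  rw [Finset.sum_comm]
  norm_num [Complex.star_def, Complex.conj_mul', ← Complex.ofReal_pow]

lemma re_trace_diagonal_mul_diagonal_mul_star (d e : n → ℝ) (W : Matrix n n ℂ) :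
    (diagonal (RCLike.ofReal ∘ d) * W * diagonal (RCLike.ofReal ∘ e) * star W).trace.re
      = ∑ i, ∑ j, ‖W i j‖ ^ 2 * (d i * e j) := by
  simp only [trace, diag_apply, Complex.re_sum]
  refine Finset.sum_congr rfl fun i _ => ?_
  rw [mul_apply, Complex.re_sum]
  refine Finset.sum_congr rfl fun j _ => ?_
  have h : (d i : ℂ) * W i j * e j * star (W i j) = ((‖W i j‖ ^ 2 * (d i * e j) : ℝ) : ℂ) := by
    rw [Complex.star_def]
    push_cast
    linear_combination (d i * e j : ℂ) * Complex.mul_conj' (W i j)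
  simp only [mul_diagonal, diagonal_mul, star_apply, Function.comp_apply]
  exact (congrArg Complex.re h).trans (Complex.ofReal_re _)

namespace IsHermitian
variable {A B : Matrix n n ℂ}

noncomputable def eigenOverlap (hA : A.IsHermitian) (hB : B.IsHermitian) (i j : n) : ℝ :=
  ‖⟪hA.eigenvectorBasis i, hB.eigenvectorBasis j⟫_ℂ‖ ^ 2

lemma star_eigenvectorUnitary_mul_apply (hA : A.IsHermitian) (hB : B.IsHermitian) (i j : n) :
    (star (hA.eigenvectorUnitary : Matrix n n ℂ) * hB.eigenvectorUnitary) i j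
      = ⟪hA.eigenvectorBasis i, hB.eigenvectorBasis j⟫_ℂ := by
  simp [Matrix.mul_apply, EuclideanSpace.inner_eq_star_dotProduct, dotProduct, mul_comm]

lemma sum_eigenOverlap_left (hA : A.IsHermitian) (hB : B.IsHermitian) (j : n) :
    ∑ i, hA.eigenOverlap hB i j = 1 := by
  simp [eigenOverlap, OrthonormalBasis.sum_sq_norm_inner_right]

lemma re_trace_cfc_mul_cfc (hA : A.IsHermitian) (hB : B.IsHermitian) (f g : ℝ → ℝ) :
    (cfc f A * cfc g B).trace.re
      = ∑ i, ∑ j, hA.eigenOverlap hB i j * (f (hA.eigenvalues i) * g (hB.eigenvalues j)) := by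
  set U : Matrix n n ℂ := ↑hA.eigenvectorUnitary
  set V : Matrix n n ℂ := ↑hB.eigenvectorUnitary
  set Df := diagonal ((RCLike.ofReal : ℝ → ℂ) ∘ f ∘ hA.eigenvalues)
  set Dg := diagonal ((RCLike.ofReal : ℝ → ℂ) ∘ g ∘ hB.eigenvalues)
  have hcyc : (cfc f A * cfc g B).trace = (Df * (star U * V) * Dg * star (star U * V)).trace := by
    rw [hA.cfc_eq, hB.cfc_eq, IsHermitian.cfc, IsHermitian.cfc]
    simp only [Unitary.conjStarAlgAut_apply, star_mul, star_star]
    calc (U * Df * star U * (V * Dg * star V)).trace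
        = (U * (Df * star U * V * Dg * star V)).trace := by simp only [mul_assoc]
      _ = (Df * star U * V * Dg * star V * U).trace := trace_mul_comm _ _
      _ = _ := by simp only [mul_assoc]
  rw [hcyc, re_trace_diagonal_mul_diagonal_mul_star]
  simp only [U, V, star_eigenvectorUnitary_mul_apply, eigenOverlap, Function.comp_apply]

lemma re_trace_cfc_right (hA : A.IsHermitian) (hB : B.IsHermitian) (g : ℝ → ℝ) :
    (cfc g B).trace.re = ∑ i, ∑ j, hA.eigenOverlap hB i j * g (hB.eigenvalues j) := by
  simpa [cfc_const_one ℝ A] using hA.re_trace_cfc_mul_cfc hB (fun _ => 1) g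

lemma re_trace_cfc_left (hA : A.IsHermitian) (hB : B.IsHermitian) (f : ℝ → ℝ) :
    (cfc f A).trace.re = ∑ i, ∑ j, hA.eigenOverlap hB i j * f (hA.eigenvalues i) := by
  simpa [cfc_const_one ℝ B] using hA.re_trace_cfc_mul_cfc hB f (fun _ => 1)

lemma re_trace_mul (hA : A.IsHermitian) (hB : B.IsHermitian) :
    (A * B).trace.re
      = ∑ i, ∑ j, hA.eigenOverlap hB i j * (hA.eigenvalues i * hB.eigenvalues j) := by
  simpa [cfc_id' ℝ A, cfc_id' ℝ B] using hA.re_trace_cfc_mul_cfc hB (fun x => x) (fun x => x)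

theorem frobenius_norm_sub_sq (hA : A.IsHermitian) (hB : B.IsHermitian) :
    ‖B - A‖ ^ 2
      = ∑ i, ∑ j, hA.eigenOverlap hB i j * (hB.eigenvalues j - hA.eigenvalues i) ^ 2 := by
  have hsq : ∀ {M : Matrix n n ℂ} (hM : M.IsHermitian), M * M = cfc (· ^ 2 : ℝ → ℝ) M :=
    fun hM => by rw [cfc_pow_id _ 2 hM.isSelfAdjoint, sq]
  have hexp : (B - A)ᴴ * (B - A) = B * B - A * B - B * A + A * A := by
    rw [(hB.sub hA).eq]; noncomm_ring
  rw [frobenius_norm_sq_eq_re_trace, hexp, trace_add, trace_sub, trace_sub, trace_mul_comm B A,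
    Complex.add_re, Complex.sub_re, Complex.sub_re, hsq hA, hsq hB, hA.re_trace_cfc_left hB,
    hA.re_trace_cfc_right hB, hA.re_trace_mul hB]
  simp only [← Finset.sum_sub_distrib, ← Finset.sum_add_distrib]
  exact Finset.sum_congr rfl fun i _ => Finset.sum_congr rfl fun j _ => by ring

theorem re_trace_cfc_sub_sub (hA : A.IsHermitian) (hB : B.IsHermitian) (f g : ℝ → ℝ) :
    (cfc f B).trace.re - (cfc f A).trace.re - (cfc g A * (B - A)).trace.re
      = ∑ i, ∑ j, hA.eigenOverlap hB i j * (f (hB.eigenvalues j) - f (hA.eigenvalues i)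
          - g (hA.eigenvalues i) * (hB.eigenvalues j - hA.eigenvalues i)) := by
  have hgA : cfc g A * A = cfc (fun x => g x * x) A := by
    rw [cfc_mul g (fun x => x) A (A.finite_real_spectrum.continuousOn _), cfc_id' ℝ A]
  have hgB : cfc g A * B = cfc g A * cfc (fun x : ℝ => x) B := by rw [cfc_id' ℝ B]
  rw [mul_sub, trace_sub, Complex.sub_re, hgA, hgB, hA.re_trace_cfc_right hB, hA.re_trace_cfc_left hB,
    hA.re_trace_cfc_mul_cfc hB, hA.re_trace_cfc_left hB]
  simp only [← Finset.sum_sub_distrib]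
  exact Finset.sum_congr rfl fun i _ => Finset.sum_congr rfl fun j _ => by ring

lemma eigenOverlap_nonneg (hA : A.IsHermitian) (hB : B.IsHermitian) (i j : n) :
    0 ≤ hA.eigenOverlap hB i j := sq_nonneg _

theorem abs_re_trace_cfc_sub_sub_le (hA : A.IsHermitian) (hB : B.IsHermitian) {f g : ℝ → ℝ}
    {L : ℝ} (hfg : ∀ i j, |f (hB.eigenvalues j) - f (hA.eigenvalues i)
      - g (hA.eigenvalues i) * (hB.eigenvalues j - hA.eigenvalues i)|
        ≤ L * (hB.eigenvalues j - hA.eigenvalues i) ^ 2) :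
    |(cfc f B).trace.re - (cfc f A).trace.re - (cfc g A * (B - A)).trace.re|
      ≤ L * ‖B - A‖ ^ 2 := by
  rw [hA.re_trace_cfc_sub_sub hB, hA.frobenius_norm_sub_sq hB, Finset.mul_sum]
  refine (Finset.abs_sum_le_sum_abs _ _).trans (Finset.sum_le_sum fun i _ => ?_)
  rw [Finset.mul_sum]
  refine (Finset.abs_sum_le_sum_abs _ _).trans (Finset.sum_le_sum fun j _ => ?_)
  rw [abs_mul, abs_of_nonneg (eigenOverlap_nonneg hA hB i j), mul_left_comm]
  exact mul_le_mul_of_nonneg_left (hfg i j) (eigenOverlap_nonneg hA hB i j)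

theorem exists_abs_eigenvalues_sub_le (hA : A.IsHermitian) (hB : B.IsHermitian) (j : n) :
    ∃ i, |hB.eigenvalues j - hA.eigenvalues i| ≤ ‖B - A‖ := by
  have : Nonempty n := ⟨j⟩
  obtain ⟨i₀, hi₀⟩ := Finite.exists_min fun i => |hB.eigenvalues j - hA.eigenvalues i|
  refine ⟨i₀, (sq_le_sq₀ (abs_nonneg _) (norm_nonneg _)).1 ?_⟩
  calc |hB.eigenvalues j - hA.eigenvalues i₀| ^ 2
      = ∑ i, hA.eigenOverlap hB i j * |hB.eigenvalues j - hA.eigenvalues i₀| ^ 2 := by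
        rw [← Finset.sum_mul, sum_eigenOverlap_left, one_mul]
    _ ≤ ∑ i, hA.eigenOverlap hB i j * (hB.eigenvalues j - hA.eigenvalues i) ^ 2 := by
        refine Finset.sum_le_sum fun i _ => mul_le_mul_of_nonneg_left ?_ (eigenOverlap_nonneg ..)
        rw [← sq_abs (hB.eigenvalues j - hA.eigenvalues i)]
        exact pow_le_pow_left₀ (abs_nonneg _) (hi₀ i) 2
    _ ≤ ∑ i, ∑ j', hA.eigenOverlap hB i j' * (hB.eigenvalues j' - hA.eigenvalues i) ^ 2 :=
        Finset.sum_le_sum fun i _ => Finset.single_le_sum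
          (f := fun j' => hA.eigenOverlap hB i j' * (hB.eigenvalues j' - hA.eigenvalues i) ^ 2)
          (fun j' _ => mul_nonneg (eigenOverlap_nonneg ..) (sq_nonneg _)) (Finset.mem_univ j)
    _ = ‖B - A‖ ^ 2 := (hA.frobenius_norm_sub_sq hB).symm

end IsHermitian

noncomputable def reTraceMulCLM (P : Matrix n n ℂ) : Matrix n n ℂ →L[ℝ] ℝ :=
  LinearMap.toContinuousLinearMap
    (Complex.reLm ∘ₗ Matrix.traceLinearMap n ℝ ℂ ∘ₗ LinearMap.mulLeft ℝ P)

@[simp]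
lemma reTraceMulCLM_apply (P M : Matrix n n ℂ) : reTraceMulCLM P M = (P * M).trace.re := rfl

open Filter Topology Asymptotics in
theorem IsHermitian.hasFDerivWithinAt_re_trace_cfc {A : Matrix n n ℂ} (hA : A.IsHermitian)
    {f g : ℝ → ℝ} {s : Set ℝ} {ε L : ℝ} (hε : 0 < ε)
    (hs : ∀ i b, |b - hA.eigenvalues i| < ε → b ∈ s)
    (hfg : ∀ a ∈ s, ∀ b ∈ s, |f b - f a - g a * (b - a)| ≤ L * (b - a) ^ 2) :
    HasFDerivWithinAt (fun B => (cfc f B).trace.re) (reTraceMulCLM (cfc g A))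
      {B | B.IsHermitian} A := by
  refine .of_isLittleO ?_
  have hbound : ∀ᶠ B in 𝓝[{B | B.IsHermitian}] A,
      ‖(cfc f B).trace.re - (cfc f A).trace.re - reTraceMulCLM (cfc g A) (B - A)‖
        ≤ L * ‖‖B - A‖ ^ 2‖ := by
    have hball : ∀ᶠ B in 𝓝 A, ‖B - A‖ < ε := (tendsto_norm_sub_self A).eventually (gt_mem_nhds hε)
    filter_upwards [self_mem_nhdsWithin, nhdsWithin_le_nhds hball] with B (hB : B.IsHermitian) hBA
    rw [Real.norm_eq_abs, norm_pow, norm_norm, reTraceMulCLM_apply]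
    refine hA.abs_re_trace_cfc_sub_sub_le hB fun i j => hfg _ (hs i _ (by simpa using hε)) _ ?_
    obtain ⟨i', hi'⟩ := hA.exists_abs_eigenvalues_sub_le hB j
    exact hs i' _ (hi'.trans_lt hBA)
  have hsq : (fun B => ‖B - A‖ ^ 2) =o[𝓝 A] fun B => B - A :=
    (isLittleO_norm_pow_id one_lt_two).comp_tendsto (tendsto_sub_nhds_zero_iff.2 tendsto_id)
  exact (IsBigO.of_bound L hbound).trans_isLittleO (hsq.mono nhdsWithin_le_nhds)

theorem hasDerivAt_re_trace_cfc {Ξ : ℝ → Matrix n n ℂ} {Ξ' : Matrix n n ℂ} {x : ℝ}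
    (hΞ : ∀ y, (Ξ y).IsHermitian) (hder : HasDerivAt Ξ Ξ' x) {f g : ℝ → ℝ} {s : Set ℝ}
    {ε L : ℝ} (hε : 0 < ε) (hs : ∀ i b, |b - (hΞ x).eigenvalues i| < ε → b ∈ s)
    (hfg : ∀ a ∈ s, ∀ b ∈ s, |f b - f a - g a * (b - a)| ≤ L * (b - a) ^ 2) :
    HasDerivAt (fun y => (cfc f (Ξ y)).trace.re) (cfc g (Ξ x) * Ξ').trace.re x :=
  ((hΞ x).hasFDerivWithinAt_re_trace_cfc hε hs hfg).comp_hasDerivAt x hder (.of_forall hΞ)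

end Matrix

theorem Finite.exists_pos_forall_le {ι α : Type*} [Finite ι] [Semiring α] [LinearOrder α]
    [IsStrictOrderedRing α] {f : ι → α} (hf : ∀ i, 0 < f i) : ∃ c > 0, ∀ i, c ≤ f i := by
  rcases isEmpty_or_nonempty ι with _ | _
  · exact ⟨1, one_pos, isEmptyElim⟩
  · obtain ⟨i₀, hi₀⟩ := Finite.exists_min f
    exact ⟨f i₀, hf i₀, hi₀⟩

open Matrix in
theorem stmt3_general {n : Type*} [Fintype n] [DecidableEq n]
    (Ξ : ℝ → Matrix n n ℂ) (Ξ' : Matrix n n ℂ) (x : ℝ)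
    (hpos : ∀ y, (Ξ y).PosDef) (hder : HasDerivAt Ξ Ξ' x)
    (β : ℝ) :
    HasDerivAt (fun y : ℝ => ((cfc (fun r : ℝ => r ^ β) (Ξ y)).trace).re)
      (((β • (mpow (Ξ x) (β - 1) * Ξ')).trace).re) x := by
  have hΞ : ∀ y, (Ξ y).IsHermitian := fun y => (hpos y).isHermitian
  obtain ⟨c, hc, hc_le⟩ := Finite.exists_pos_forall_le (hpos x).eigenvalues_pos
  obtain ⟨R, hR⟩ := Finite.bddAbove_range (hΞ x).eigenvalues
  have hs : ∀ i b, |b - (hΞ x).eigenvalues i| < c / 2 → b ∈ Set.Icc (c / 2) (R + c / 2) :=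
    fun i b hb => by
      have hR_i : (hΞ x).eigenvalues i ≤ R := hR ⟨i, rfl⟩
      constructor <;> linarith [abs_lt.1 hb, hc_le i]
  obtain ⟨L, hL⟩ := exists_abs_rpow_sub_sub_le β (R := R + c / 2) (half_pos hc)
  have hP : cfc (fun r => β * r ^ (β - 1)) (Ξ x) = β • mpow (Ξ x) (β - 1) :=
    cfc_const_mul β _ _ ((Ξ x).finite_real_spectrum.continuousOn _)
  refine (hasDerivAt_re_trace_cfc hΞ hder (half_pos hc) hs hL).congr_deriv ?_
  rw [hP, smul_mul_assoc]

theorem stmt3 {n : Type*} [Fintype n] [DecidableEq n]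
    (Ξ : ℝ → Matrix n n ℂ) (Ξ' : Matrix n n ℂ) (x : ℝ)
    (hpos : ∀ y, (Ξ y).PosDef) (hder : HasDerivAt Ξ Ξ' x)
    (β : ℝ) (hβ : β ∈ Set.Ioo (0 : ℝ) 1) :
    HasDerivAt (fun y : ℝ => ((cfc (fun r : ℝ => r ^ β) (Ξ y)).trace).re)
      (((β • (mpow (Ξ x) (β - 1) * Ξ')).trace).re) x :=
  stmt3_general Ξ Ξ' x hpos hder β
end

section
/- The sandwiched Rényi divergence at α = 2 dominates: for density operators ρ and positive definite σ, D̃_2(ρ‖σ) = log₂ Tr(ρ σ^(−1/2) ρ σ^(−1/2)) ≥ D(ρ‖σ), where D(ρ‖σ) = Tr(ρ(log₂ρ − log₂σ)) is the Umegaki relative entropy. -/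
open scoped Kronecker Matrix ComplexOrder

attribute [local instance] Matrix.frobeniusNormedAddCommGroup Matrix.frobeniusNormedSpace

/-!
Diagonalise `ρ = ∑ pᵢ |uᵢ⟩⟨uᵢ|` and `σ = ∑ qⱼ |vⱼ⟩⟨vⱼ|` and put `cᵢⱼ = |⟨uᵢ, vⱼ⟩|²`, a
row-stochastic matrix. Keeping only the diagonal terms of
`Tr(ρ σ^(-1/2) ρ σ^(-1/2)) = ∑ᵢₖ pᵢ pₖ |⟨uᵢ, σ^(-1/2) uₖ⟩|²` bounds it below by `∑ pᵢ² bᵢ²`, where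
`bᵢ = ⟨uᵢ, σ^(-1/2) uᵢ⟩ = ∑ⱼ cᵢⱼ qⱼ^(-1/2)`. Concavity of `log`, used once in every row of `c`
(`-∑ⱼ cᵢⱼ log qⱼ ≤ 2 log bᵢ`) and once with the weights `pᵢ`, gives
`D(ρ‖σ) ≤ ∑ pᵢ log (pᵢ bᵢ²) ≤ log ∑ pᵢ² bᵢ²`.
-/

open Finset Real

lemma Real.sum_mul_log_le_log_sum_mul {ι : Type*} (s : Finset ι) {w x : ι → ℝ}
    (hw : ∀ i ∈ s, 0 ≤ w i) (hw1 : ∑ i ∈ s, w i = 1) (hx : ∀ i ∈ s, w i ≠ 0 → 0 < x i) :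
    ∑ i ∈ s, w i * log (x i) ≤ log (∑ i ∈ s, w i * x i) := by
  classical
  have hsupp (f : ι → ℝ) : ∑ i ∈ s with w i ≠ 0, w i * f i = ∑ i ∈ s, w i * f i :=
    sum_filter_of_ne fun _ _ h => left_ne_zero_of_mul h
  rw [← hsupp, ← hsupp]
  simpa only [smul_eq_mul] using strictConcaveOn_log_Ioi.concaveOn.le_map_sum
    (fun i hi => hw i (mem_filter.1 hi).1) (by rw [sum_filter_ne_zero, hw1])
    (fun i hi => hx i (mem_filter.1 hi).1 (mem_filter.1 hi).2)

lemma Real.sum_mul_logb_le_logb_sum_mul {ι : Type*} (s : Finset ι) {b : ℝ} (hb : 1 ≤ b)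
    {w x : ι → ℝ} (hw : ∀ i ∈ s, 0 ≤ w i) (hw1 : ∑ i ∈ s, w i = 1)
    (hx : ∀ i ∈ s, w i ≠ 0 → 0 < x i) :
    ∑ i ∈ s, w i * logb b (x i) ≤ logb b (∑ i ∈ s, w i * x i) := by
  simp only [logb, mul_div_assoc', ← sum_div]
  exact div_le_div_of_nonneg_right (sum_mul_log_le_log_sum_mul s hw hw1 hx) (log_nonneg hb)

lemma Finset.sum_mul_pos_of_sum_eq_one {ι : Type*} (s : Finset ι) {w x : ι → ℝ}
    (hw : ∀ i ∈ s, 0 ≤ w i) (hw1 : ∑ i ∈ s, w i = 1) (hx : ∀ i ∈ s, w i ≠ 0 → 0 < x i) :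
    0 < ∑ i ∈ s, w i * x i := by
  obtain ⟨i, hi, hwi⟩ := exists_ne_zero_of_sum_ne_zero (hw1 ▸ one_ne_zero)
  refine sum_pos' (fun j hj => ?_) ⟨i, hi, mul_pos ((hw i hi).lt_of_ne' hwi) (hx i hi hwi)⟩
  rcases eq_or_ne (w j) 0 with h | h
  · simp [h]
  · exact mul_nonneg (hw j hj) (hx j hj h).le

namespace Matrix

variable {n : Type*} [Fintype n] [DecidableEq n]

lemma mul_diagonal_mul_conjTranspose_apply_self (W : Matrix n n ℂ) (d : n → ℝ) (i : n) :
    (W * diagonal (fun j => (d j : ℂ)) * Wᴴ) i i = ↑(∑ j, d j * Complex.normSq (W i j)) := by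
  rw [mul_apply]
  simp only [mul_diagonal, conjTranspose_apply, Complex.ofReal_sum,
    Complex.ofReal_mul, Complex.normSq_eq_conj_mul_self, RCLike.star_def]
  exact sum_congr rfl fun j _ => by ring

lemma sum_normSq_apply_eq_one {W : Matrix n n ℂ} (hW : W ∈ unitaryGroup n ℂ) (i : n) :
    ∑ j, Complex.normSq (W i j) = 1 := by
  have h := mul_diagonal_mul_conjTranspose_apply_self W 1 i
  simp only [Pi.one_apply, Complex.ofReal_one, diagonal_one, mul_one, one_mul] at h
  rw [← star_eq_conjTranspose, (mem_unitaryGroup_iff).1 hW, one_apply_eq] at h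
  exact_mod_cast h.symm

namespace IsHermitian

variable {A : Matrix n n ℂ} (hA : A.IsHermitian)

lemma trace_mul_eq_sum (X : Matrix n n ℂ) :
    (A * X).trace = ∑ i, (hA.eigenvalues i : ℂ) *
      (star (hA.eigenvectorUnitary : Matrix n n ℂ) * X * hA.eigenvectorUnitary) i i := by
  conv_lhs => rw [hA.spectral_theorem, Unitary.conjStarAlgAut_apply]
  rw [mul_assoc, mul_assoc, trace_mul_comm, mul_assoc]
  simp [trace, diagonal_mul]

lemma conj_cfc_apply_self (f : ℝ → ℝ) (U : Matrix n n ℂ) (i : n) :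
    (star U * cfc f A * U) i i = ↑(∑ j, f (hA.eigenvalues j) *
      Complex.normSq ((star U * hA.eigenvectorUnitary) i j)) := by
  rw [hA.cfc_eq, IsHermitian.cfc, Unitary.conjStarAlgAut_apply,
    ← mul_diagonal_mul_conjTranspose_apply_self]
  simp [conjTranspose_mul, star_eq_conjTranspose, mul_assoc, Function.comp_def]

lemma re_trace_mul_cfc {B : Matrix n n ℂ} (hB : B.IsHermitian) (f : ℝ → ℝ) :
    (A * cfc f B).trace.re = ∑ i, hA.eigenvalues i * ∑ j, f (hB.eigenvalues j) * Complex.normSq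
      ((star (hA.eigenvectorUnitary : Matrix n n ℂ) * hB.eigenvectorUnitary) i j) := by
  simp only [hA.trace_mul_eq_sum, hB.conj_cfc_apply_self, Complex.re_sum, ← Complex.ofReal_mul,
    Complex.ofReal_re]

lemma re_trace_mul_cfc_self (f : ℝ → ℝ) :
    (A * cfc f A).trace.re = ∑ i, hA.eigenvalues i * f (hA.eigenvalues i) := by
  simp [hA.re_trace_mul_cfc hA, one_apply]

end IsHermitian

lemma PosSemidef.sum_sq_mul_normSq_le_re_trace {A M : Matrix n n ℂ} (hA : A.PosSemidef)
    (hM : M.IsHermitian) :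
    ∑ i, hA.1.eigenvalues i ^ 2 * Complex.normSq
        ((star (hA.1.eigenvectorUnitary : Matrix n n ℂ) * M * hA.1.eigenvectorUnitary) i i) ≤
      (A * M * A * M).trace.re := by
  rw [mul_assoc A, mul_assoc A, hA.1.trace_mul_eq_sum]
  set U := hA.1.eigenvectorUnitary
  set B := star (U : Matrix n n ℂ) * M * U
  have hBD : star (U : Matrix n n ℂ) * (M * A * M) * U =
      B * diagonal (fun i => (hA.1.eigenvalues i : ℂ)) * Bᴴ := by
    have hB : Bᴴ = B := by
      rw [← star_eq_conjTranspose]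
      simp only [B, star_mul, star_star, star_eq_conjTranspose M, hM.eq, mul_assoc]
    conv_lhs => rw [hA.1.spectral_theorem, Unitary.conjStarAlgAut_apply]
    rw [hB]
    simp only [B, mul_assoc, Function.comp_def]
    rfl
  simp only [hBD, mul_diagonal_mul_conjTranspose_apply_self, Complex.re_sum,
    ← Complex.ofReal_mul, Complex.ofReal_re]
  refine sum_le_sum fun i _ => ?_
  rw [sq, mul_assoc]
  exact mul_le_mul_of_nonneg_left
    (single_le_sum (f := fun k => hA.1.eigenvalues k * Complex.normSq (B i k))
      (fun k _ => mul_nonneg (hA.eigenvalues_nonneg k) (Complex.normSq_nonneg _)) (mem_univ i))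
    (hA.eigenvalues_nonneg i)

end Matrix

lemma umegaki_eq_sum {n : Type*} [Fintype n] [DecidableEq n] {ρ σ : Matrix n n ℂ}
    (hρ : ρ.IsHermitian) (hσ : σ.IsHermitian) :
    umegaki ρ σ = ∑ i, hρ.eigenvalues i * logb 2 (hρ.eigenvalues i) -
      ∑ i, hρ.eigenvalues i * ∑ j, logb 2 (hσ.eigenvalues j) * Complex.normSq
        ((star (hρ.eigenvectorUnitary : Matrix n n ℂ) * hσ.eigenvectorUnitary) i j) := by
  rw [umegaki, mul_sub, Matrix.trace_sub, Complex.sub_re, hρ.re_trace_mul_cfc_self,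
    hρ.re_trace_mul_cfc hσ]

lemma sum_mul_logb_sub_le_logb_of_le {ι κ : Type*} [Fintype ι] [Fintype κ] {p : ι → ℝ}
    {q : κ → ℝ} {c : ι → κ → ℝ} (hp : ∀ i, 0 ≤ p i) (hp1 : ∑ i, p i = 1) (hq : ∀ j, 0 < q j)
    (hc : ∀ i j, 0 ≤ c i j) (hc1 : ∀ i, ∑ j, c i j = 1) {T : ℝ}
    (hT : ∑ i, p i ^ 2 * (∑ j, q j ^ (-(1/2) : ℝ) * c i j) ^ 2 ≤ T) :
    ∑ i, p i * logb 2 (p i) - ∑ i, p i * ∑ j, logb 2 (q j) * c i j ≤ logb 2 T := by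
  set b : ι → ℝ := fun i => ∑ j, c i j * q j ^ (-(1/2) : ℝ)
  have hb (i : ι) : 0 < b i :=
    sum_mul_pos_of_sum_eq_one univ (fun j _ => hc i j) (hc1 i) fun j _ _ => rpow_pos_of_pos (hq j) _
  have hrow (i : ι) : -∑ j, logb 2 (q j) * c i j ≤ 2 * logb 2 (b i) := by
    have h := sum_mul_logb_le_logb_sum_mul univ one_le_two (fun j _ => hc i j) (hc1 i)
      fun j _ _ => rpow_pos_of_pos (hq j) (-(1/2))
    simp only [logb_rpow_eq_mul_logb_of_pos (hq _), mul_left_comm (c i _), ← mul_sum] at h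
    simp only [mul_comm (logb 2 _)]
    linarith
  have hsplit (i : ι) : p i * logb 2 (p i * b i ^ 2) = p i * (logb 2 (p i) + 2 * logb 2 (b i)) := by
    rcases eq_or_ne (p i) 0 with h | h
    · simp [h]
    · rw [logb_mul h (pow_pos (hb i) 2).ne', logb_pow, Nat.cast_ofNat]
  have hcollision : ∑ i, p i * (p i * b i ^ 2) ≤ T := by
    convert hT using 2 with i
    simp only [b, mul_comm (c i _)]
    ring
  calc ∑ i, p i * logb 2 (p i) - ∑ i, p i * ∑ j, logb 2 (q j) * c i j
      ≤ ∑ i, p i * logb 2 (p i * b i ^ 2) := by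
        rw [← sum_sub_distrib]
        refine sum_le_sum fun i _ => ?_
        rw [hsplit]
        linear_combination mul_le_mul_of_nonneg_left (hrow i) (hp i)
    _ ≤ logb 2 (∑ i, p i * (p i * b i ^ 2)) :=
        sum_mul_logb_le_logb_sum_mul univ one_le_two (fun i _ => hp i) hp1
          fun i _ h => mul_pos ((hp i).lt_of_ne' h) (pow_pos (hb i) 2)
    _ ≤ logb 2 T :=
        logb_le_logb_of_le one_lt_two (sum_mul_pos_of_sum_eq_one univ (fun i _ => hp i) hp1
          fun i _ h => mul_pos ((hp i).lt_of_ne' h) (pow_pos (hb i) 2)) hcollision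

theorem stmt18 {n : Type*} [Fintype n] [DecidableEq n]
    (ρ σ : Matrix n n ℂ) (hρ : ρ.PosSemidef) (htr : ρ.trace = 1) (hσ : σ.PosDef) :
    Real.logb 2 (((ρ * mpow σ (-(1/2) : ℝ) * ρ * mpow σ (-(1/2) : ℝ)).trace).re) ≥
      umegaki ρ σ := by
  have hp1 : ∑ i, hρ.1.eigenvalues i = 1 := by
    simpa [Complex.re_sum] using congrArg Complex.re (hρ.1.trace_eq_sum_eigenvalues.symm.trans htr)
  have hcollision := hρ.sum_sq_mul_normSq_le_re_trace (M := mpow σ (-(1/2)))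
    (cfc_predicate _ σ : IsSelfAdjoint _).isHermitian
  simp only [mpow, hσ.1.conj_cfc_apply_self, Complex.normSq_ofReal, ← sq] at hcollision
  rw [ge_iff_le, umegaki_eq_sum hρ.1 hσ.1]
  exact sum_mul_logb_sub_le_logb_of_le hρ.eigenvalues_nonneg hp1 hσ.eigenvalues_pos
    (fun _ _ => Complex.normSq_nonneg _)
    (Matrix.sum_normSq_apply_eq_one (mul_mem (Unitary.star_mem (Subtype.prop _)) (Subtype.prop _)))
    hcollision
end
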